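/- arXiv:2001.02189 — 2 statements merged into one kernel-verified Lean document; each statement's English description precedes it below -/
import Mathlib

section
/- Let G be a finite simple graph with n(G) ≥ 2 such that both G and its complement \bar{G} are connected, and suppose gp(G\bar{G}) = n(G) + 1. Then for every general position set S of G\bar{G} of cardinality n(G) + 1 there exists a vertex v of G with eccentricity equal to the radius of G such that v ∈ S, S ∩ V(G) = {u ∈ V(G) : d_G(u,v) = 2} ∪ {v}, and S ∩ V(\bar{G}) is exactly the set of copies \bar{u} of the vertices u in the closed neighborhood N_G[v]. -/
open SimpleGraph

variable {V : Type*}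

/-- `v` lies on a geodesic (shortest path) between `u` and `w` in `G`. -/
def liesOnGeodesic (G : SimpleGraph V) (u v w : V) : Prop :=
  G.Reachable u w ∧ G.dist u v + G.dist v w = G.dist u w

/-- `S` is a general position set in `G`: no element of `S` lies on a geodesic
between two other elements of `S`. -/
def isGenPosSet (G : SimpleGraph V) (S : Set V) : Prop :=
  ∀ u ∈ S, ∀ v ∈ S, ∀ w ∈ S, u ≠ v → v ≠ w → u ≠ w → ¬ liesOnGeodesic G u v w

/-- The general position number `gp(G)` of `G`. -/
noncomputable def gpNum (G : SimpleGraph V) : ℕ :=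
  sSup {n : ℕ | ∃ S : Set V, isGenPosSet G S ∧ S.ncard = n}

/-- `S` is a `3`-general position set in `G`: no three vertices of `S` lie on a
common geodesic of length at most `3`. -/
def isGP3Set (G : SimpleGraph V) (S : Set V) : Prop :=
  ∀ u ∈ S, ∀ v ∈ S, ∀ w ∈ S, u ≠ v → v ≠ w → u ≠ w →
    ¬ (liesOnGeodesic G u v w ∧ G.dist u w ≤ 3)

/-- The `3`-general position number `gp₃(G)` of `G`. -/
noncomputable def gp3Num (G : SimpleGraph V) : ℕ :=
  sSup {n : ℕ | ∃ S : Set V, isGP3Set G S ∧ S.ncard = n}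

/-- The complementary prism `G\bar{G}`: the disjoint union of `G` (left copy) and
its complement `Gᶜ` (right copy), together with the perfect matching joining each
vertex to its copy. -/
def compPrism (G : SimpleGraph V) : SimpleGraph (V ⊕ V) where
  Adj x y :=
    match x, y with
    | Sum.inl a, Sum.inl b => G.Adj a b
    | Sum.inr a, Sum.inr b => Gᶜ.Adj a b
    | Sum.inl a, Sum.inr b => a = b
    | Sum.inr a, Sum.inl b => a = b
  symm := by
    constructor
    rintro (a | a) (b | b) h
    · exact (G.adj_comm a b).mp h
    · exact Eq.symm h
    · exact Eq.symm h
    · exact (Gᶜ.adj_comm a b).mp h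
  loopless := by
    constructor
    rintro (a | a) h
    · exact G.loopless.irrefl a h
    · exact Gᶜ.loopless.irrefl a h

/-- The eccentricity of a vertex: the maximum distance to another vertex. -/
noncomputable def ecc (G : SimpleGraph V) (v : V) : ℕ :=
  sSup (Set.range (G.dist v))

/-- The radius of a graph: the minimum eccentricity. -/
noncomputable def rad (G : SimpleGraph V) : ℕ :=
  sInf (Set.range (ecc G))

/-- The diameter of a graph: the maximum distance between two vertices. -/
noncomputable def graphDiam (G : SimpleGraph V) : ℕ :=
  sSup {n : ℕ | ∃ u v : V, G.dist u v = n}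

/-- `\bar{gp}₃(G)`: the maximum, over all `gp₃`-sets `S` of `G`, of the `3`-general
position number of the subgraph of `Gᶜ` induced by the vertices outside `S`. -/
noncomputable def barGp3 (G : SimpleGraph V) : ℕ :=
  sSup {n : ℕ | ∃ S : Set V, isGP3Set G S ∧ S.ncard = gp3Num G ∧
          gp3Num ((Gᶜ).induce Sᶜ) = n}

/-- A cut vertex: its removal disconnects the graph. -/
def isCutVertex (G : SimpleGraph V) (v : V) : Prop :=
  ¬ (G.induce {u : V | u ≠ v}).Connected

/-- `B` is the vertex set of a `2`-connected subgraph of `G`: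
it has at least `3` vertices and removing any one vertex leaves it connected. -/
def isTwoConnectedSet (G : SimpleGraph V) (B : Set V) : Prop :=
  3 ≤ B.ncard ∧ ∀ v ∈ B, (G.induce (B \ {v})).Connected

/-- A block graph: every maximal `2`-connected subgraph is a clique. -/
def isBlockGraph (G : SimpleGraph V) : Prop :=
  ∀ B : Set V, isTwoConnectedSet G B →
    (∀ B' : Set V, isTwoConnectedSet G B' → B ⊆ B' → B = B') →
    G.IsClique B

/-- Complete multipartite graph: the vertices can be partitioned (via an
equivalence relation, whose classes are the parts) so that two vertices are
adjacent iff they lie in different parts. -/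
def isCompleteMultipartite (G : SimpleGraph V) : Prop :=
  ∃ r : V → V → Prop, Equivalence r ∧ ∀ u v, G.Adj u v ↔ ¬ r u v

/-- The hypercube `Q_n`: binary strings of length `n`, two strings being
adjacent when they differ in exactly one coordinate. -/
def hypercube (n : ℕ) : SimpleGraph (Fin n → Bool) where
  Adj x y := {i : Fin n | x i ≠ y i}.ncard = 1
  symm := by
    constructor
    intro x y h
    simpa [ne_comm] using h
  loopless := by
    constructor
    intro x
    simp

/-- The block graph `G_k`: a chain of `k+1` triangles `{vᵢ, uᵢ, vᵢ₊₁}`,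
with the `v`-vertices `v₁, …, v_{k+2}` indexed by `Fin (k+2)` (left summand)
and the `u`-vertices `u₁, …, u_{k+1}` indexed by `Fin (k+1)` (right summand);
the edges are `vᵢvᵢ₊₁`, `uᵢvᵢ` and `uᵢvᵢ₊₁`. -/
def Gk (k : ℕ) : SimpleGraph (Fin (k + 2) ⊕ Fin (k + 1)) where
  Adj x y :=
    match x, y with
    | Sum.inl a, Sum.inl b => a.val + 1 = b.val ∨ b.val + 1 = a.val
    | Sum.inl a, Sum.inr b => a.val = b.val ∨ a.val = b.val + 1
    | Sum.inr a, Sum.inl b => b.val = a.val ∨ b.val = a.val + 1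
    | Sum.inr _, Sum.inr _ => False
  symm := by
    constructor
    rintro (a | a) (b | b) h
    · exact Or.symm h
    · exact h
    · exact h
    · exact h
  loopless := by
    constructor
    rintro (a | a) h
    · omega
    · exact h

/-!
Since `|S| = n + 1`, some vertex `v` has both copies in `S`. The triples `(v̄, v, u)`,
`(u, v̄, v)` and `(v, v̄, ū)` of the prism then force every other `u ∈ S ∩ V(G)` to be at
distance exactly two from `v` in `G`, and every other `ū ∈ S ∩ V(Ḡ)` to come from a neighbour
of `v`. So `v` is the only vertex with both copies in `S`, and counting shows that every vertex
has a copy in `S`. Hence `v` has eccentricity at most two, while connectivity of `Ḡ` gives every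
vertex a non-neighbour, i.e. eccentricity at least two.
-/

open Sum

section Metric

variable {G : SimpleGraph V} {u v w : V}

lemma SimpleGraph.dist_eq_two_iff :
    G.dist u v = 2 ↔ u ≠ v ∧ ¬ G.Adj u v ∧ (G.commonNeighbors u v).Nonempty := by
  rw [← edist_eq_two_iff, dist, ENat.toNat_eq_iff two_ne_zero]
  rfl

lemma liesOnGeodesic_of_dist_add_dist_eq (h : G.dist u v + G.dist v w = G.dist u w)
    (huw : G.dist u w ≠ 0) : liesOnGeodesic G u v w :=
  ⟨Reachable.of_dist_ne_zero huw, h⟩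

lemma dist_le_ecc [Finite V] (G : SimpleGraph V) (v w : V) : G.dist v w ≤ ecc G v :=
  le_csSup (Set.finite_range _).bddAbove ⟨w, rfl⟩

lemma ecc_le_of_forall_dist_le {k : ℕ} (h : ∀ w, G.dist v w ≤ k) : ecc G v ≤ k :=
  csSup_le' (by rintro _ ⟨w, rfl⟩; exact h w)

lemma ecc_eq_rad_of_forall_ecc_le (h : ∀ u, ecc G v ≤ ecc G u) : ecc G v = rad G :=
  le_antisymm (le_csInf ⟨_, v, rfl⟩ (by rintro _ ⟨u, rfl⟩; exact h u))
    (csInf_le (OrderBot.bddBelow _) ⟨v, rfl⟩)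

lemma two_le_ecc [Finite V] (hG : G.Connected) (huw : Gᶜ.Adj u w) : 2 ≤ ecc G u :=
  (hG.one_lt_dist_of_ne_of_not_adj huw.ne huw.2).trans_le (dist_le_ecc G u w)

lemma ecc_eq_rad_of_forall_dist_le_two [Finite V] [Nontrivial V] (hG : G.Connected)
    (hGc : Gᶜ.Connected) (hv : ∀ u, G.dist v u ≤ 2) : ecc G v = rad G :=
  ecc_eq_rad_of_forall_ecc_le fun u =>
    have ⟨_, huw⟩ := hGc.preconnected.exists_adj_of_nontrivial u
    (ecc_le_of_forall_dist_le hv).trans (two_le_ecc hG huw)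

end Metric

lemma Set.ncard_preimage_inl_add_ncard_preimage_inr {α β : Type*} [Finite α] [Finite β]
    (S : Set (α ⊕ β)) : (inl ⁻¹' S).ncard + (inr ⁻¹' S).ncard = S.ncard := by
  have hS : S = inl '' (inl ⁻¹' S) ∪ inr '' (inr ⁻¹' S) := by
    ext (a | b) <;> simp
  conv_rhs => rw [hS]
  rw [ncard_union_eq (disjoint_left.2 (by simp)), ncard_image_of_injective _ inl_injective,
    ncard_image_of_injective _ inr_injective]

section Counting

variable [Finite V] {S : Set (V ⊕ V)}

lemma exists_inl_mem_and_inr_mem (hS : Nat.card V < S.ncard) : ∃ v, inl v ∈ S ∧ inr v ∈ S := by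
  have hunion := Set.ncard_union_add_ncard_inter (inl ⁻¹' S) (inr ⁻¹' S)
  have hle := Set.ncard_le_card (inl ⁻¹' S ∪ inr ⁻¹' S)
  have hpos : 0 < (inl ⁻¹' S ∩ inr ⁻¹' S).ncard := by
    have := S.ncard_preimage_inl_add_ncard_preimage_inr
    omega
  exact (Set.ncard_pos (Set.toFinite _)).1 hpos

lemma forall_inl_mem_or_inr_mem {v : V} (hS : Nat.card V + 1 ≤ S.ncard)
    (hv : ∀ u, inl u ∈ S → inr u ∈ S → u = v) : ∀ u, inl u ∈ S ∨ inr u ∈ S := by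
  have hunion := Set.ncard_union_add_ncard_inter (inl ⁻¹' S) (inr ⁻¹' S)
  have hinter : (inl ⁻¹' S ∩ inr ⁻¹' S).ncard ≤ 1 :=
    (Set.ncard_le_ncard fun u hu => hv u hu.1 hu.2).trans (Set.ncard_singleton v).le
  have huniv : inl ⁻¹' S ∪ inr ⁻¹' S = Set.univ := by
    by_contra hne
    have := Set.ncard_lt_card hne
    have := S.ncard_preimage_inl_add_ncard_preimage_inr
    omega
  exact fun u => Set.eq_univ_iff_forall.1 huniv u

end Counting

namespace compPrism

variable {G : SimpleGraph V} {S : Set (V ⊕ V)} {a b u v : V}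

@[simp] lemma adj_inl_inl : (compPrism G).Adj (inl a) (inl b) ↔ G.Adj a b := Iff.rfl
@[simp] lemma adj_inr_inr : (compPrism G).Adj (inr a) (inr b) ↔ Gᶜ.Adj a b := Iff.rfl
@[simp] lemma adj_inl_inr : (compPrism G).Adj (inl a) (inr b) ↔ a = b := Iff.rfl
@[simp] lemma adj_inr_inl : (compPrism G).Adj (inr a) (inl b) ↔ a = b := Iff.rfl

lemma dist_inl_inr_self (a : V) : (compPrism G).dist (inl a) (inr a) = 1 :=
  dist_eq_one_iff_adj.2 rfl

lemma dist_inr_inl_self (a : V) : (compPrism G).dist (inr a) (inl a) = 1 :=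
  dist_eq_one_iff_adj.2 rfl

lemma dist_inl_inl_of_adj (h : G.Adj a b) : (compPrism G).dist (inl a) (inl b) = 1 :=
  dist_eq_one_iff_adj.2 h

lemma dist_inr_inr_of_adj (h : Gᶜ.Adj a b) : (compPrism G).dist (inr a) (inr b) = 1 :=
  dist_eq_one_iff_adj.2 h

lemma dist_inl_inr_of_ne (h : a ≠ b) : (compPrism G).dist (inl a) (inr b) = 2 := by
  refine dist_eq_two_iff.2 ⟨inl_ne_inr, h, ?_⟩
  by_cases hab : G.Adj a b
  · exact ⟨inl b, hab, rfl⟩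
  · exact ⟨inr a, rfl, (compl_adj G b a).2 ⟨h.symm, fun hba => hab hba.symm⟩⟩

lemma dist_inr_inl_of_ne (h : a ≠ b) : (compPrism G).dist (inr a) (inl b) = 2 := by
  rw [SimpleGraph.dist_comm, dist_inl_inr_of_ne h.symm]

lemma dist_inl_inl_eq_three (hab : a ≠ b) (hnadj : ¬ G.Adj a b)
    (hcn : G.commonNeighbors a b = ∅) : (compPrism G).dist (inl a) (inl b) = 3 := by
  let p : (compPrism G).Walk (inl a) (inl b) :=
    .cons (adj_inl_inr.2 rfl) (.cons (adj_inr_inr.2 ⟨hab, hnadj⟩) (.cons (adj_inr_inl.2 rfl) .nil))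
  have hcn' : (compPrism G).commonNeighbors (inl a) (inl b) = ∅ := by
    ext (w | w)
    · simpa [mem_commonNeighbors] using fun haw hbw => hcn.subset ⟨haw, hbw⟩
    · simpa [mem_commonNeighbors] using fun haw hbw => hab (haw.trans hbw.symm)
  have hlt : 2 < (compPrism G).edist (inl a) (inl b) :=
    two_lt_edist_iff.2 ⟨by simpa using hab, hnadj, hcn'⟩
  rw [← Reachable.coe_dist_eq_edist ⟨p⟩] at hlt
  have hle : (compPrism G).dist (inl a) (inl b) ≤ 3 := dist_le p
  norm_cast at hlt
  omega

variable (hS : isGenPosSet (compPrism G) S) (hvl : inl v ∈ S) (hvr : inr v ∈ S)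
include hS hvl hvr

lemma not_adj_of_isGenPosSet (hu : inl u ∈ S) (huv : u ≠ v) : ¬ G.Adj u v := fun hadj =>
  hS (inr v) hvr (inl v) hvl (inl u) hu inr_ne_inl (by simpa using huv.symm) inr_ne_inl <|
    liesOnGeodesic_of_dist_add_dist_eq
      (by rw [dist_inr_inl_self, dist_inl_inl_of_adj hadj.symm, dist_inr_inl_of_ne huv.symm])
      (by rw [dist_inr_inl_of_ne huv.symm]; norm_num)

lemma adj_of_isGenPosSet (hu : inr u ∈ S) (huv : u ≠ v) : G.Adj v u := by
  by_contra hnadj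
  have hc : Gᶜ.Adj v u := ⟨huv.symm, hnadj⟩
  exact hS (inl v) hvl (inr v) hvr (inr u) hu inl_ne_inr (by simpa using huv.symm) inl_ne_inr <|
    liesOnGeodesic_of_dist_add_dist_eq
      (by rw [dist_inl_inr_self, dist_inr_inr_of_adj hc, dist_inl_inr_of_ne huv.symm])
      (by rw [dist_inl_inr_of_ne huv.symm]; norm_num)

lemma dist_eq_two_of_isGenPosSet (hu : inl u ∈ S) (huv : u ≠ v) : G.dist u v = 2 := by
  have hnadj := not_adj_of_isGenPosSet hS hvl hvr hu huv
  refine dist_eq_two_iff.2 ⟨huv, hnadj, Set.nonempty_iff_ne_empty.2 fun hcn => ?_⟩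
  -- with no common neighbour, `v̄` lies on a geodesic of length three from `u` to `v`
  exact hS (inl u) hu (inr v) hvr (inl v) hvl inl_ne_inr inr_ne_inl (by simpa using huv) <|
    liesOnGeodesic_of_dist_add_dist_eq
      (by rw [dist_inl_inr_of_ne huv, dist_inr_inl_self, dist_inl_inl_eq_three huv hnadj hcn])
      (by rw [dist_inl_inl_eq_three huv hnadj hcn]; norm_num)

variable (hcover : ∀ u, inl u ∈ S ∨ inr u ∈ S)
include hcover

lemma setOf_inl_mem_eq : {u | inl u ∈ S} = {u | G.dist u v = 2} ∪ {v} := by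
  ext u
  constructor
  · intro hu
    by_cases huv : u = v
    · exact Or.inr huv
    · exact Or.inl (dist_eq_two_of_isGenPosSet hS hvl hvr hu huv)
  · rintro (h2 | rfl)
    · refine (hcover u).resolve_right fun hu => ?_
      have huv : u ≠ v := by rintro rfl; simp at h2
      have h1 := dist_eq_one_iff_adj.2 (adj_of_isGenPosSet hS hvl hvr hu huv).symm
      exact absurd (h1.symm.trans h2) (by norm_num)
    · exact hvl

lemma setOf_inr_mem_eq : {u | inr u ∈ S} = G.neighborSet v ∪ {v} := by
  ext u
  constructor
  · intro hu
    by_cases huv : u = v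
    · exact Or.inr huv
    · exact Or.inl (adj_of_isGenPosSet hS hvl hvr hu huv)
  · rintro (hadj | rfl)
    · exact (hcover u).resolve_left fun hu =>
        not_adj_of_isGenPosSet hS hvl hvr hu hadj.ne' (G.adj_symm hadj)
    · exact hvr

end compPrism

theorem gpSet_structure_of_gp_compPrism_eq_general {V : Type*} [Fintype V] (G : SimpleGraph V)
    (hn : 2 ≤ Fintype.card V) (hG : G.Connected) (hGc : Gᶜ.Connected) :
    ∀ S : Set (V ⊕ V), isGenPosSet (compPrism G) S → S.ncard = Fintype.card V + 1 →
      ∃ v : V, ecc G v = rad G ∧ Sum.inl v ∈ S ∧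
        {u : V | Sum.inl u ∈ S} = {u : V | G.dist u v = 2} ∪ {v} ∧
        {u : V | Sum.inr u ∈ S} = G.neighborSet v ∪ {v} := by
  intro S hS hcard
  rw [← Nat.card_eq_fintype_card] at hcard
  obtain ⟨v, hvl, hvr⟩ := exists_inl_mem_and_inr_mem (S := S) (by omega)
  have hcover : ∀ u, inl u ∈ S ∨ inr u ∈ S :=
    forall_inl_mem_or_inr_mem hcard.ge fun u hul hur => by_contra fun huv =>
      compPrism.not_adj_of_isGenPosSet hS hvl hvr hul huv
        (compPrism.adj_of_isGenPosSet hS hvl hvr hur huv).symm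
  have hdist : ∀ u, G.dist v u ≤ 2 := by
    intro u
    rw [SimpleGraph.dist_comm]
    rcases eq_or_ne u v with rfl | huv
    · simp
    rcases hcover u with hu | hu
    · exact (compPrism.dist_eq_two_of_isGenPosSet hS hvl hvr hu huv).le
    · rw [dist_eq_one_iff_adj.2 (compPrism.adj_of_isGenPosSet hS hvl hvr hu huv).symm]
      norm_num
  have : Nontrivial V := Fintype.one_lt_card_iff_nontrivial.1 hn
  exact ⟨v, ecc_eq_rad_of_forall_dist_le_two hG hGc hdist, hvl,
    compPrism.setOf_inl_mem_eq hS hvl hvr hcover, compPrism.setOf_inr_mem_eq hS hvl hvr hcover⟩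

/-- If `n(G) ≥ 2`, both `G` and `Gᶜ` are connected and `gp(G\bar{G}) = n(G) + 1`,
then every general position set `S` of `G\bar{G}` of cardinality `n(G) + 1` contains
a `G`-central vertex `v` with `S ∩ V(G) = {u : d_G(u,v) = 2} ∪ {v}` and
`S ∩ V(Gᶜ)` equal to the copy of the closed neighbourhood `N_G[v]`. -/
theorem gpSet_structure_of_gp_compPrism_eq {V : Type*} [Fintype V] (G : SimpleGraph V)
    (hn : 2 ≤ Fintype.card V) (hG : G.Connected) (hGc : Gᶜ.Connected)
    (hgp : gpNum (compPrism G) = Fintype.card V + 1) :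
    ∀ S : Set (V ⊕ V), isGenPosSet (compPrism G) S → S.ncard = Fintype.card V + 1 →
      ∃ v : V, ecc G v = rad G ∧ Sum.inl v ∈ S ∧
        {u : V | Sum.inl u ∈ S} = {u : V | G.dist u v = 2} ∪ {v} ∧
        {u : V | Sum.inr u ∈ S} = G.neighborSet v ∪ {v} :=
  gpSet_structure_of_gp_compPrism_eq_general G hn hG hGc
end

section
/- Let n, m ≥ 2 and let P_{nm} = P_n □ P_m be the Cartesian product of paths P_n and P_m. Then gp(P_{nm}\bar{P}_{nm}) = 10 if n = m = 3, and gp(P_{nm}\bar{P}_{nm}) = nm otherwise. -/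
open SimpleGraph

variable {V : Type*}

/-!
In the complementary prism `H` of `G`, `v` and `v̄` are adjacent, `u` and `v̄` are at distance
`2` for `u ≠ v`, and any two vertices are at distance at most `3`. Let `S` be in general position
in `H`, with traces `A` on `G` and `B` on `Ḡ`. If `x ∈ A ∩ B`, the triples `z, x, x̄` and
`z, x̄, x` force every other `z ∈ A` to lie at distance exactly `2` from `x` in `H`, so `z` is not
adjacent to `x` in `G`; symmetrically every other `z ∈ B` has `z̄` at distance `2` from `x̄`, so
`z` is adjacent to `x` in `G`. Hence `|A ∩ B| ≤ 1` and `|S| ≤ |V| + 1`. Moreover `|S| ≤ |V|` as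
soon as every `x` has some `z ≠ x` with `d(x, z) ≠ 2` and `d(x̄, z̄) ≠ 2`, such as a vertex at
distance at least `3` from `x` in `G`. Every grid except `P₃ □ P₃` has such vertices
(`P₂ □ P₂` and `P₂ □ P₃` by a finite check).

For the lower bound, a bipartition `V = E ∪ Eᶜ` of `G` gives the general position set `E ∪ Ēᶜ`:
with weight `1` on the copy of `G` and `0` on that of `Ḡ`, distinct `p, q` in it satisfy
`ℓ p < d(p, q) ≤ ℓ p + ℓ q + 1`, so `d(u, v) + d(v, w) > d(u, w)`. In `P₃ □ P₃` the centre of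
`Ḡ` can be added to it.
-/

namespace SimpleGraph

variable {W : Type*} {K : SimpleGraph W} {u v : W}

/-- A computable stand-in for `K.dist` on graphs of diameter at most `3`. -/
def cappedDist (K : SimpleGraph W) [DecidableEq W] [Fintype W] [DecidableRel K.Adj]
    (u v : W) : ℕ :=
  if u = v then 0 else if K.Adj u v then 1 else if ∃ w, K.Adj u w ∧ K.Adj w v then 2 else 3

theorem Reachable.dist_eq_cappedDist [DecidableEq W] [Fintype W] [DecidableRel K.Adj]
    (h : K.Reachable u v) (h3 : K.dist u v ≤ 3) : K.dist u v = K.cappedDist u v := by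
  unfold cappedDist
  split_ifs with huv hadj hcommon
  · simp [huv]
  · exact dist_eq_one_iff_adj.mpr hadj
  · obtain ⟨w, huw, hwv⟩ := hcommon
    have h2 : K.dist u v ≤ 2 := by simpa using dist_le (huw.toWalk.append hwv.toWalk)
    have := h.one_lt_dist_of_ne_of_not_adj huv hadj
    omega
  · have h2 : K.dist u v ≠ 2 := fun h2 => by
      have : K.edist u v = 2 := by rw [← h.coe_dist_eq_edist, h2]; rfl
      obtain ⟨w, hw⟩ := (edist_eq_two_iff.mp this).2.2
      rw [mem_commonNeighbors] at hw
      exact hcommon ⟨w, hw.1, hw.2.symm⟩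
    have := h.one_lt_dist_of_ne_of_not_adj huv hadj
    omega

end SimpleGraph

open SimpleGraph

section GeneralPosition

variable {W : Type*} {K : SimpleGraph W} {S : Set W}

theorem isGenPosSet.dist_eq_two (hS : isGenPosSet K S) (hK : K.Preconnected) {x y z : W}
    (hx : x ∈ S) (hy : y ∈ S) (hz : z ∈ S) (hxz : x ≠ z) (hxy : K.Adj x y)
    (hyz : K.dist y z = 2) (hxz3 : K.dist x z ≤ 3) : K.dist x z = 2 := by
  have hyz' : y ≠ z := by rintro rfl; simp at hyz
  have hxy1 : K.dist x y = 1 := dist_eq_one_iff_adj.mpr hxy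
  have := (hK x z).pos_dist_of_ne hxz
  by_contra h2
  obtain h1 | h3 : K.dist x z = 1 ∨ K.dist x z = 3 := by omega
  · refine hS z hz x hx y hy hxz.symm hxy.ne hyz'.symm ⟨hK z y, ?_⟩
    rw [dist_comm, h1, hxy1, dist_comm, hyz]
  · exact hS x hx y hy z hz hxy.ne hyz' hxz ⟨hK x z, by rw [hxy1, hyz, h3]⟩

theorem isGenPosSet_of_lt_dist_of_dist_le (ℓ : W → ℕ)
    (hlt : ∀ p ∈ S, ∀ q ∈ S, p ≠ q → ℓ p < K.dist p q)
    (hle : ∀ p ∈ S, ∀ q ∈ S, K.dist p q ≤ ℓ p + ℓ q + 1) : isGenPosSet K S := by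
  rintro u hu v hv w hw huv hvw huw ⟨-, h⟩
  have := hlt u hu v hv huv
  have hw' := hlt w hw v hv hvw.symm
  rw [dist_comm] at hw'
  have := hle u hu w hw
  omega

theorem isGenPosSet_coe_finset_iff [DecidableEq W] [Fintype W] [DecidableRel K.Adj]
    (hK : K.Preconnected) (h3 : ∀ u v, K.dist u v ≤ 3) (F : Finset W) :
    isGenPosSet K F ↔ ∀ u ∈ F, ∀ v ∈ F, ∀ w ∈ F, u ≠ v → v ≠ w → u ≠ w →
      K.cappedDist u v + K.cappedDist v w ≠ K.cappedDist u w := by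
  have hd : ∀ u v, K.dist u v = K.cappedDist u v := fun u v =>
    (hK u v).dist_eq_cappedDist (h3 u v)
  simp only [isGenPosSet, liesOnGeodesic, Finset.mem_coe, hd, hK _ _, true_and]

theorem gpNum_eq_of_isGenPosSet {t : ℕ} (hS : isGenPosSet K S) (hSt : S.ncard = t)
    (hle : ∀ T, isGenPosSet K T → T.ncard ≤ t) : gpNum K = t :=
  IsGreatest.csSup_eq ⟨⟨S, hS, hSt⟩, by rintro _ ⟨T, hT, rfl⟩; exact hle T hT⟩

end GeneralPosition

section SumCard

variable {α β : Type*} [Finite α] [Finite β]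

theorem Set.ncard_image_inl_union_image_inr (s : Set α) (t : Set β) :
    (Sum.inl '' s ∪ Sum.inr '' t).ncard = s.ncard + t.ncard := by
  rw [Set.ncard_union_eq Set.disjoint_image_inl_image_inr,
    Set.ncard_image_of_injective _ Sum.inl_injective,
    Set.ncard_image_of_injective _ Sum.inr_injective]

theorem Set.ncard_eq_ncard_preimage_inl_add_ncard_preimage_inr (S : Set (α ⊕ β)) :
    S.ncard = (Sum.inl ⁻¹' S).ncard + (Sum.inr ⁻¹' S).ncard := by
  conv_lhs => rw [← Set.image_preimage_inl_union_image_preimage_inr S]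
  exact Set.ncard_image_inl_union_image_inr _ _

end SumCard

section CompPrism

open Sum

variable {G : SimpleGraph V} {a b : V}

@[simp] theorem compPrism_adj_inl_inl : (compPrism G).Adj (inl a) (inl b) ↔ G.Adj a b := Iff.rfl
@[simp] theorem compPrism_adj_inr_inr : (compPrism G).Adj (inr a) (inr b) ↔ Gᶜ.Adj a b := Iff.rfl
@[simp] theorem compPrism_adj_inl_inr : (compPrism G).Adj (inl a) (inr b) ↔ a = b := Iff.rfl
@[simp] theorem compPrism_adj_inr_inl : (compPrism G).Adj (inr a) (inl b) ↔ a = b := Iff.rfl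

instance [DecidableEq V] [DecidableRel G.Adj] : DecidableRel (compPrism G).Adj
  | inl _, inl _ => decidable_of_iff' _ compPrism_adj_inl_inl
  | inr _, inr _ => decidable_of_iff' _ compPrism_adj_inr_inr
  | inl _, inr _ => decidable_of_iff' _ compPrism_adj_inl_inr
  | inr _, inl _ => decidable_of_iff' _ compPrism_adj_inr_inl

theorem compPrism_exists_walk_length_le_three (p q : V ⊕ V) :
    ∃ w : (compPrism G).Walk p q, w.length ≤ 3 := by
  have nil {p : V ⊕ V} : ∃ w : (compPrism G).Walk p p, w.length ≤ 3 := ⟨.nil, by simp⟩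
  have one {p q : V ⊕ V} (h : (compPrism G).Adj p q) : ∃ w : (compPrism G).Walk p q,
      w.length ≤ 3 := ⟨h.toWalk, by simp⟩
  have two {p r q : V ⊕ V} (h₁ : (compPrism G).Adj p r) (h₂ : (compPrism G).Adj r q) :
      ∃ w : (compPrism G).Walk p q, w.length ≤ 3 := ⟨.cons h₁ h₂.toWalk, by simp⟩
  have three {p r s q : V ⊕ V} (h₁ : (compPrism G).Adj p r) (h₂ : (compPrism G).Adj r s)
      (h₃ : (compPrism G).Adj s q) : ∃ w : (compPrism G).Walk p q, w.length ≤ 3 :=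
    ⟨.cons h₁ (.cons h₂ h₃.toWalk), by simp⟩
  rcases p with a | a <;> rcases q with b | b <;> obtain rfl | hab := eq_or_ne a b
  · exact nil
  · by_cases hadj : G.Adj a b
    · exact one hadj
    · exact three (r := inr a) (s := inr b) rfl ⟨hab, hadj⟩ rfl
  · exact one rfl
  · by_cases hadj : G.Adj a b
    · exact two (r := inl b) hadj rfl
    · exact two (r := inr a) rfl ⟨hab, hadj⟩
  · exact one rfl
  · by_cases hadj : G.Adj a b
    · exact two (r := inl a) rfl hadj
    · exact two (r := inr b) ⟨hab, hadj⟩ rfl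
  · exact nil
  · by_cases hadj : G.Adj a b
    · exact three (r := inl a) (s := inl b) rfl hadj rfl
    · exact one ⟨hab, hadj⟩

theorem compPrism_preconnected (G : SimpleGraph V) : (compPrism G).Preconnected := fun p q =>
  (compPrism_exists_walk_length_le_three p q).elim fun w _ => ⟨w⟩

theorem compPrism_dist_le_three (G : SimpleGraph V) (p q : V ⊕ V) : (compPrism G).dist p q ≤ 3 :=
  (compPrism_exists_walk_length_le_three p q).elim fun w hw => (dist_le w).trans hw

theorem compPrism_dist_inl_inr_of_ne (hab : a ≠ b) : (compPrism G).dist (inl a) (inr b) = 2 := by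
  have hle : (compPrism G).dist (inl a) (inr b) ≤ 2 := by
    by_cases hadj : G.Adj a b
    · exact (dist_le (.cons (compPrism_adj_inl_inl.mpr hadj)
        (compPrism_adj_inl_inr.mpr rfl).toWalk)).trans (by simp)
    · exact (dist_le (.cons (compPrism_adj_inl_inr.mpr rfl)
        (compPrism_adj_inr_inr.mpr ⟨hab, hadj⟩).toWalk)).trans (by simp)
  have := (compPrism_preconnected G (inl a) (inr b)).one_lt_dist_of_ne_of_not_adj
    (by simp) (by simpa using hab)
  omega

theorem compPrism_dist_inl_inl_of_two_lt_edist (h : 2 < G.edist a b) :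
    (compPrism G).dist (inl a) (inl b) = 3 := by
  obtain ⟨hab, hadj, hcommon⟩ := two_lt_edist_iff.mp h
  have h2 : 2 < (compPrism G).edist (inl a) (inl b) := by
    refine two_lt_edist_iff.mpr ⟨by simpa using hab, by simpa using hadj, ?_⟩
    refine Set.eq_empty_of_forall_notMem fun w hw => ?_
    rw [mem_commonNeighbors] at hw
    rcases w with c | c
    · exact (Set.eq_empty_iff_forall_notMem.mp hcommon) c
        ((G.mem_commonNeighbors).mpr hw)
    · exact hab ((compPrism_adj_inl_inr.mp hw.1).trans (compPrism_adj_inl_inr.mp hw.2).symm)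
  have := compPrism_dist_le_three G (inl a) (inl b)
  rw [← (compPrism_preconnected G _ _).coe_dist_eq_edist] at h2
  norm_cast at h2
  omega

theorem compPrism_dist_eq_cappedDist [Fintype V] [DecidableEq V] [DecidableRel G.Adj]
    (p q : V ⊕ V) : (compPrism G).dist p q = (compPrism G).cappedDist p q :=
  (compPrism_preconnected G p q).dist_eq_cappedDist (compPrism_dist_le_three G p q)

end CompPrism

section UpperBound

open Sum

variable {G : SimpleGraph V} {S : Set (V ⊕ V)}

theorem isGenPosSet.compPrism_dist_inl_inl_eq_two (hS : isGenPosSet (compPrism G) S) {x z : V}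
    (hxl : inl x ∈ S) (hxr : inr x ∈ S) (hz : inl z ∈ S) (hzx : z ≠ x) :
    (compPrism G).dist (inl x) (inl z) = 2 :=
  hS.dist_eq_two (compPrism_preconnected G) hxl hxr hz (by simpa using hzx.symm) rfl
    (by rw [dist_comm, compPrism_dist_inl_inr_of_ne hzx]) (compPrism_dist_le_three G _ _)

theorem isGenPosSet.compPrism_dist_inr_inr_eq_two (hS : isGenPosSet (compPrism G) S) {x z : V}
    (hxl : inl x ∈ S) (hxr : inr x ∈ S) (hz : inr z ∈ S) (hzx : z ≠ x) :
    (compPrism G).dist (inr x) (inr z) = 2 :=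
  hS.dist_eq_two (compPrism_preconnected G) hxr hxl hz (by simpa using hzx.symm) rfl
    (compPrism_dist_inl_inr_of_ne hzx.symm) (compPrism_dist_le_three G _ _)

theorem isGenPosSet.subsingleton_compPrism_inter (hS : isGenPosSet (compPrism G) S) :
    (inl ⁻¹' S ∩ inr ⁻¹' S).Subsingleton := by
  rintro x ⟨hxl, hxr⟩ z ⟨hzl, hzr⟩
  by_contra hxz
  have hl := hS.compPrism_dist_inl_inl_eq_two hxl hxr hzl (Ne.symm hxz)
  have hr := hS.compPrism_dist_inr_inr_eq_two hxl hxr hzr (Ne.symm hxz)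
  have hnadj : ¬ G.Adj x z := fun h => by
    rw [dist_eq_one_iff_adj.mpr (compPrism_adj_inl_inl.mpr h)] at hl; omega
  have hnadjc : ¬ Gᶜ.Adj x z := fun h => by
    rw [dist_eq_one_iff_adj.mpr (compPrism_adj_inr_inr.mpr h)] at hr; omega
  exact hnadjc ⟨hxz, hnadj⟩

theorem isGenPosSet.ncard_le_card_add_one [Finite V] (hS : isGenPosSet (compPrism G) S) :
    S.ncard ≤ Nat.card V + 1 := by
  have : Finite ↑(inl ⁻¹' S ∩ inr ⁻¹' S) := Set.toFinite _
  rw [Set.ncard_eq_ncard_preimage_inl_add_ncard_preimage_inr, ← Set.ncard_union_add_ncard_inter]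
  exact add_le_add (Set.ncard_le_card _)
    (Set.ncard_le_one_iff_subsingleton.mpr hS.subsingleton_compPrism_inter)

theorem isGenPosSet.ncard_le_card [Finite V] (hS : isGenPosSet (compPrism G) S)
    (hext : ∀ x, ∃ z, z ≠ x ∧ (compPrism G).dist (inl x) (inl z) ≠ 2 ∧
      (compPrism G).dist (inr x) (inr z) ≠ 2) :
    S.ncard ≤ Nat.card V := by
  have : Finite ↑(inl ⁻¹' S ∩ inr ⁻¹' S) := Set.toFinite _
  rw [Set.ncard_eq_ncard_preimage_inl_add_ncard_preimage_inr, ← Set.ncard_union_add_ncard_inter]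
  obtain hempty | ⟨x, hxl, hxr⟩ := (inl ⁻¹' S ∩ inr ⁻¹' S).eq_empty_or_nonempty
  · simpa [hempty] using Set.ncard_le_card _
  obtain ⟨z, hzx, hl, hr⟩ := hext x
  have hz : z ∉ inl ⁻¹' S ∪ inr ⁻¹' S := by
    rintro (hzl | hzr)
    · exact hl (hS.compPrism_dist_inl_inl_eq_two hxl hxr hzl hzx)
    · exact hr (hS.compPrism_dist_inr_inr_eq_two hxl hxr hzr hzx)
  have := Set.ncard_lt_card (s := inl ⁻¹' S ∪ inr ⁻¹' S) (fun h => hz (h ▸ Set.mem_univ z))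
  have := Set.ncard_le_one_iff_subsingleton.mpr hS.subsingleton_compPrism_inter
  omega

end UpperBound

section LowerBound

open Sum

variable {G : SimpleGraph V}

theorem isGenPosSet_compPrism_of_isBipartiteWith {s : Set V} (h : G.IsBipartiteWith s sᶜ) :
    isGenPosSet (compPrism G) (inl '' s ∪ inr '' sᶜ) := by
  have hs : ∀ a ∈ s, ∀ b ∈ s, ¬ G.Adj a b := fun a _ b hb hab => h.mem_of_mem_adj ‹_› hab hb
  have hsc : ∀ a ∈ sᶜ, ∀ b ∈ sᶜ, ¬ G.Adj a b := fun a ha b hb hab => ha (h.mem_of_mem_adj' hb hab)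
  refine isGenPosSet_of_lt_dist_of_dist_le (Sum.elim 1 0) ?_ ?_
  · rintro p hp q hq hpq
    rcases hp with ⟨a, ha, rfl⟩ | ⟨a, ha, rfl⟩
    · refine (compPrism_preconnected G _ q).one_lt_dist_of_ne_of_not_adj hpq ?_
      rcases hq with ⟨b, hb, rfl⟩ | ⟨b, hb, rfl⟩
      · exact hs a ha b hb
      · rintro rfl; exact hb ha
    · exact (compPrism_preconnected G _ q).pos_dist_of_ne hpq
  · rintro p hp q hq
    have := compPrism_dist_le_three G p q
    rcases hp with ⟨a, ha, rfl⟩ | ⟨a, ha, rfl⟩ <;> rcases hq with ⟨b, hb, rfl⟩ | ⟨b, hb, rfl⟩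
    · simpa using this
    · simp [compPrism_dist_inl_inr_of_ne (G := G) (fun hab : a = b => hb (hab ▸ ha))]
    · simp [dist_comm, compPrism_dist_inl_inr_of_ne (G := G) (fun hab : b = a => ha (hab ▸ hb))]
    · obtain rfl | hab := eq_or_ne a b
      · simp
      · simp [dist_eq_one_iff_adj.mpr (compPrism_adj_inr_inr.mpr ⟨hab, hsc a ha b hb⟩)]

end LowerBound

section Grid

open Sum

instance (n : ℕ) : DecidableRel (pathGraph n).Adj := fun _ _ => decidable_of_iff' _ pathGraph_adj

instance {α β : Type*} {G : SimpleGraph α} {H : SimpleGraph β} [DecidableEq α] [DecidableEq β]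
    [DecidableRel G.Adj] [DecidableRel H.Adj] : DecidableRel (G □ H).Adj :=
  fun _ _ => decidable_of_iff' _ boxProd_adj

theorem boxProd_pathGraph_isBipartiteWith (n m : ℕ) :
    (pathGraph n □ pathGraph m).IsBipartiteWith {v | Even (v.1.val + v.2.val)}
      {v | Even (v.1.val + v.2.val)}ᶜ where
  disjoint := disjoint_compl_right
  mem_of_adj v w h := by
    simp only [boxProd_adj, pathGraph_adj, ← Fin.val_inj] at h
    simp only [Set.mem_ofPred_eq, Set.mem_compl_iff, Nat.even_iff]
    omega

theorem pathGraph_exists_one_lt_edist {n : ℕ} (hn : 4 ≤ n) (x : Fin n) :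
    ∃ z, 1 < (pathGraph n).edist x z := by
  refine ⟨⟨if 2 * x.val < n then n - 1 else 0, by split_ifs <;> omega⟩, ?_⟩
  rw [← not_le, edist_le_one_iff_adj_or_eq, pathGraph_adj, ← Fin.val_inj]
  split_ifs <;> simp <;> omega

theorem boxProd_pathGraph_exists_two_lt_edist {n m : ℕ} (hn : 2 ≤ n) (hm : 2 ≤ m)
    (h4 : 4 ≤ n ∨ 4 ≤ m) (x : Fin n × Fin m) :
    ∃ z, 2 < (pathGraph n □ pathGraph m).edist x z := by
  have two_lt {e₁ e₂ : ℕ∞} (h₁ : 1 < e₁) (h₂ : 0 < e₂) : 2 < e₁ + e₂ :=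
    calc (2 : ℕ∞) < 1 + 1 + 1 := by norm_num
      _ ≤ e₁ + e₂ := add_le_add (Order.add_one_le_of_lt h₁) (Order.one_le_iff_pos.mpr h₂)
  have : Nontrivial (Fin n) := Fin.nontrivial_iff_two_le.mpr hn
  have : Nontrivial (Fin m) := Fin.nontrivial_iff_two_le.mpr hm
  rcases h4 with h4 | h4
  · obtain ⟨z₁, hz₁⟩ := pathGraph_exists_one_lt_edist h4 x.1
    obtain ⟨z₂, hz₂⟩ := exists_ne x.2
    exact ⟨(z₁, z₂), by rw [edist_boxProd]; exact two_lt hz₁ (edist_pos_of_ne hz₂.symm)⟩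
  · obtain ⟨z₁, hz₁⟩ := exists_ne x.1
    obtain ⟨z₂, hz₂⟩ := pathGraph_exists_one_lt_edist h4 x.2
    exact ⟨(z₁, z₂), by rw [edist_boxProd, add_comm]; exact two_lt hz₂ (edist_pos_of_ne hz₁.symm)⟩

theorem compPrism_boxProd_pathGraph_exists_dist_ne_two {n m : ℕ} (hn : 2 ≤ n) (hm : 2 ≤ m)
    (h33 : ¬ (n = 3 ∧ m = 3)) (x : Fin n × Fin m) : ∃ z, z ≠ x ∧
      (compPrism (pathGraph n □ pathGraph m)).dist (inl x) (inl z) ≠ 2 ∧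
      (compPrism (pathGraph n □ pathGraph m)).dist (inr x) (inr z) ≠ 2 := by
  by_cases h4 : 4 ≤ n ∨ 4 ≤ m
  · obtain ⟨z, hz⟩ := boxProd_pathGraph_exists_two_lt_edist hn hm h4 x
    obtain ⟨hxz, hadj, -⟩ := two_lt_edist_iff.mp hz
    refine ⟨z, hxz.symm, by rw [compPrism_dist_inl_inl_of_two_lt_edist hz]; omega, ?_⟩
    rw [dist_eq_one_iff_adj.mpr (compPrism_adj_inr_inr.mpr ⟨hxz, hadj⟩)]
    omega
  · simp only [compPrism_dist_eq_cappedDist]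
    revert x
    obtain ⟨rfl | rfl, rfl | rfl⟩ : (n = 2 ∨ n = 3) ∧ (m = 2 ∨ m = 3) := by omega
    · decide
    · decide
    · decide
    · exact absurd ⟨rfl, rfl⟩ h33

theorem isGenPosSet_compPrism_boxProd_pathGraph_three_three :
    isGenPosSet (compPrism (pathGraph 3 □ pathGraph 3))
      ↑({inl (0, 0), inl (0, 2), inl (2, 0), inl (2, 2), inl (1, 1),
        inr (0, 1), inr (1, 0), inr (1, 2), inr (2, 1), inr (1, 1)} :
        Finset ((Fin 3 × Fin 3) ⊕ (Fin 3 × Fin 3))) := by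
  rw [isGenPosSet_coe_finset_iff (compPrism_preconnected _) (compPrism_dist_le_three _)]
  decide

end Grid

/-- For `n, m ≥ 2` and the grid `P_{nm} = P_n □ P_m`:
`gp(P_{nm}\bar{P}_{nm}) = 10` if `n = m = 3`, and `gp(P_{nm}\bar{P}_{nm}) = nm`
otherwise. -/
theorem gp_compPrism_grid (n m : ℕ) (hn : 2 ≤ n) (hm : 2 ≤ m) :
    gpNum (compPrism ((pathGraph n).boxProd (pathGraph m))) =
      if n = 3 ∧ m = 3 then 10 else n * m := by
  split_ifs with h33
  · obtain ⟨rfl, rfl⟩ := h33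
    refine gpNum_eq_of_isGenPosSet isGenPosSet_compPrism_boxProd_pathGraph_three_three
      (by rw [Set.ncard_coe_finset]; decide) fun T hT => ?_
    simpa using hT.ncard_le_card_add_one
  · have hS := isGenPosSet_compPrism_of_isBipartiteWith (boxProd_pathGraph_isBipartiteWith n m)
    refine gpNum_eq_of_isGenPosSet hS ?_ fun T hT => ?_
    · rw [Set.ncard_image_inl_union_image_inr, Set.ncard_add_ncard_compl]
      simp
    · simpa using hT.ncard_le_card (compPrism_boxProd_pathGraph_exists_dist_ne_two hn hm h33)
end
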